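/- arXiv:1102.0948 — 6 statements merged into one kernel-verified Lean document; each statement's English description precedes it below -/
import Mathlib

section
/- (Takagi factorization for symmetric states) A vector |φ⟩ ∈ H_n ⊗ H_n lies in the symmetric subspace S if and only if it admits a symmetric Schmidt decomposition |φ⟩ = Σ_{j=1}^n α_j |φ_j⟩⊗|φ_j⟩ with α_j ≥ 0 and {|φ_j⟩} an orthonormal basis of H_n. -/
/-! The matrix `A = (φ (i, j))` of a symmetric vector is symmetric, so the antilinear map
`T x = A x̄` satisfies `⟪T x, y⟫ = ⟪T y, x⟫`. Over `ℝ` (with inner product `Re ⟪·, ·⟫`) such a `T`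
is a symmetric operator, so it has an eigenvector, and since `T (i v) = -i T v` the eigenvalue can be
taken nonnegative. `T` preserves the orthogonal complement of that eigenvector, so induction gives an
orthonormal basis `u j` with `A ū_j = α_j u_j`, `α_j ≥ 0`; expanding the standard basis vectors in it
gives `A = ∑ j, α_j u_j u_jᵀ`, which is the symmetric Schmidt decomposition of `φ`. -/

open Matrix BigOperators
open scoped ComplexOrder

noncomputable section

/-- |φ⟩⟨φ| as a matrix. -/
def ketbra {n : ℕ} (φ : Fin n → ℂ) : Matrix (Fin n) (Fin n) ℂ :=
  Matrix.vecMulVec φ (star φ)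

/-- Quadratic form ⟨v|M|v⟩. -/
def qf {m : Type*} [Fintype m] (M : Matrix m m ℂ) (v : m → ℂ) : ℂ :=
  star v ⬝ᵥ M *ᵥ v

/-- Tensor (Kronecker) product of vectors |ψ⟩⊗|χ⟩. -/
def kron {n : ℕ} (ψ χ : Fin n → ℂ) : Fin n × Fin n → ℂ :=
  fun p => ψ p.1 * χ p.2

/-- Unit vector predicate. -/
def unitv {n : ℕ} (φ : Fin n → ℂ) : Prop := star φ ⬝ᵥ φ = 1

/-- Linear maps on L(H_n), represented as linear maps on n×n matrices. -/
abbrev MatMap (n : ℕ) := Matrix (Fin n) (Fin n) ℂ →ₗ[ℂ] Matrix (Fin n) (Fin n) ℂ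

/-- Choi matrix C_Λ = Σ_{i,j} |i⟩⟨j| ⊗ Λ(|i⟩⟨j|). -/
def choi {n : ℕ} (Λ : MatMap n) : Matrix (Fin n × Fin n) (Fin n × Fin n) ℂ :=
  Matrix.of fun p q => Λ (Matrix.single p.1 q.1 1) p.2 q.2

/-- Partial transpose on the first factor, i.e. (T ⊗ id_n)(M). -/
def ptA {n : ℕ} (M : Matrix (Fin n × Fin n) (Fin n × Fin n) ℂ) :
    Matrix (Fin n × Fin n) (Fin n × Fin n) ℂ :=
  Matrix.of fun p q => M (q.1, p.2) (p.1, q.2)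

/-- The flip (swap) operator F on H_n ⊗ H_n. -/
def flipOp (n : ℕ) : Matrix (Fin n × Fin n) (Fin n × Fin n) ℂ :=
  Matrix.of fun p q => if p.1 = q.2 ∧ p.2 = q.1 then 1 else 0

/-- Projection onto the symmetric subspace, P_S = (1/2)(I + F). -/
def Psym (n : ℕ) : Matrix (Fin n × Fin n) (Fin n × Fin n) ℂ :=
  (1/2 : ℂ) • (1 + flipOp n)

/-- Gate fidelity F_Λ(|φ⟩) = ⟨φ|Λ(|φ⟩⟨φ|)|φ⟩. -/
def fid {n : ℕ} (Λ : MatMap n) (φ : Fin n → ℂ) : ℂ := qf (Λ (ketbra φ)) φ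

/-- Trace preserving. -/
def IsTP {n : ℕ} (Λ : MatMap n) : Prop := ∀ X, (Λ X).trace = X.trace

/-- Completely positive (via Choi's theorem: Choi matrix PSD). -/
def IsCP {n : ℕ} (Λ : MatMap n) : Prop := (choi Λ).PosSemidef

/-- Quantum channel: completely positive and trace preserving. -/
def IsChannel {n : ℕ} (Λ : MatMap n) : Prop := IsCP Λ ∧ IsTP Λ

/-- Λd is the Hilbert–Schmidt dual of Λ : Tr(Λ(X)Y) = Tr(X Λd(Y)). -/
def IsDual {n : ℕ} (Λ Λd : MatMap n) : Prop :=
  ∀ X Y, (Λ X * Y).trace = (X * Λd Y).trace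

/-- Standard basis vector. -/
def stdV (n : ℕ) (i : Fin n) : Fin n → ℂ := Pi.single i 1

/-- The symmetric subspace S = span{|i⟩|j⟩ + |j⟩|i⟩}. -/
def Ssub (n : ℕ) : Submodule ℂ (Fin n × Fin n → ℂ) :=
  Submodule.span ℂ {v | ∃ i j, v = kron (stdV n i) (stdV n j) + kron (stdV n j) (stdV n i)}

/-- The maximally entangled state |ψ₊⟩ = (1/√n) Σ_j |jj⟩. -/
def psiPlus (n : ℕ) : Fin n × Fin n → ℂ :=
  fun p => if p.1 = p.2 then ((Real.sqrt n : ℂ))⁻¹ else 0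

open Module
open scoped InnerProductSpace

theorem Orthonormal.fin_cons_of_mem_orthogonal {𝕜 E : Type*} [RCLike 𝕜] [NormedAddCommGroup E]
    [InnerProductSpace 𝕜 E] {d : ℕ} {v : E} (hv : ‖v‖ = 1) {u : Fin d → (𝕜 ∙ v)ᗮ}
    (hu : Orthonormal 𝕜 u) :
    Orthonormal 𝕜 (Fin.cons v fun j => (u j : E) : Fin (d + 1) → E) := by
  have hu' : Orthonormal 𝕜 fun j => (u j : E) := hu.comp_linearIsometry (𝕜 ∙ v)ᗮ.subtypeₗᵢ
  have hvu : ∀ j, ⟪v, (u j : E)⟫_𝕜 = 0 := fun j =>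
    Submodule.mem_orthogonal_singleton_iff_inner_right.mp (u j).2
  refine ⟨Fin.cases hv fun j => hu'.1 j, fun i j hij => ?_⟩
  cases i using Fin.cases <;> cases j using Fin.cases
  · exact absurd rfl hij
  · simpa using hvu _
  · simp only [Fin.cons_succ, Fin.cons_zero]
    rw [← inner_conj_symm, hvu, map_zero]
  · simpa using hu'.2 fun h => hij (by rw [h])

namespace LinearMap

variable {E : Type*} [NormedAddCommGroup E] [InnerProductSpace ℂ E]

def toRealLinear (T : E →ₗ⋆[ℂ] E) : E →ₗ[ℝ] E where
  toFun := T
  map_add' := T.map_add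
  map_smul' r x := by simpa [Complex.coe_smul] using T.map_smulₛₗ (r : ℂ) x

def IsSymmetricAntilinear (T : E →ₗ⋆[ℂ] E) : Prop :=
  ∀ x y, ⟪T x, y⟫_ℂ = ⟪T y, x⟫_ℂ

namespace IsSymmetricAntilinear

variable {T : E →ₗ⋆[ℂ] E}

theorem isSymmetric_toRealLinear (hT : T.IsSymmetricAntilinear) :
    letI := InnerProductSpace.complexToReal (G := E)
    T.toRealLinear.IsSymmetric := by
  intro x y
  change (⟪T x, y⟫_ℂ).re = (⟪x, T y⟫_ℂ).re
  rw [hT, ← inner_conj_symm, Complex.conj_re]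

theorem exists_eigenvector_nonneg [FiniteDimensional ℂ E] [Nontrivial E]
    (hT : T.IsSymmetricAntilinear) :
    ∃ (v : E) (c : ℝ), ‖v‖ = 1 ∧ 0 ≤ c ∧ T v = (c : ℂ) • v := by
  let _ := InnerProductSpace.complexToReal (G := E)
  have hS := hT.isSymmetric_toRealLinear
  have hpos : 0 < finrank ℝ E := finrank_pos
  set v := hS.eigenvectorBasis rfl ⟨0, hpos⟩
  set c := hS.eigenvalues rfl ⟨0, hpos⟩
  have hv : ‖v‖ = 1 := (hS.eigenvectorBasis rfl).orthonormal.1 _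
  have hTv : T v = (c : ℂ) • v := by
    rw [Complex.coe_smul]
    exact hS.apply_eigenvectorBasis rfl _
  rcases le_or_gt 0 c with hc | hc
  · exact ⟨v, c, hv, hc, hTv⟩
  · refine ⟨Complex.I • v, -c, by rw [norm_smul, Complex.norm_I, one_mul, hv], by linarith, ?_⟩
    rw [map_smulₛₗ, hTv, Complex.conj_I, smul_comm, Complex.ofReal_neg, neg_smul, smul_neg,
      neg_smul]

theorem apply_mem_orthogonal_singleton (hT : T.IsSymmetricAntilinear) {v : E} {c : ℂ}
    (hv : T v = c • v) {x : E} (hx : x ∈ (ℂ ∙ v)ᗮ) : T x ∈ (ℂ ∙ v)ᗮ := by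
  rw [Submodule.mem_orthogonal_singleton_iff_inner_right] at hx ⊢
  rw [← inner_conj_symm, hT, hv, inner_smul_left, hx, mul_zero, map_zero]

theorem restrict {K : Submodule ℂ E} (hT : T.IsSymmetricAntilinear) (hK : ∀ x ∈ K, T x ∈ K) :
    (T.restrict hK).IsSymmetricAntilinear :=
  fun x y => hT x y

theorem exists_orthonormal_eigenvectors_nonneg [FiniteDimensional ℂ E]
    (hT : T.IsSymmetricAntilinear) :
    ∃ (u : Fin (finrank ℂ E) → E) (α : Fin (finrank ℂ E) → ℝ),
      Orthonormal ℂ u ∧ (∀ j, 0 ≤ α j) ∧ ∀ j, T (u j) = (α j : ℂ) • u j := by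
  induction hd : finrank ℂ E generalizing E with
  | zero =>
    exact ⟨Fin.elim0, Fin.elim0, ⟨fun i => i.elim0, fun i => i.elim0⟩, fun i => i.elim0,
      fun i => i.elim0⟩
  | succ d ih =>
    have : Nontrivial E := nontrivial_of_finrank_eq_succ hd
    obtain ⟨v, c, hv, hc, hTv⟩ := hT.exists_eigenvector_nonneg
    have hK : finrank ℂ (ℂ ∙ v)ᗮ = d := by
      have := Submodule.finrank_add_finrank_orthogonal (ℂ ∙ v)
      rw [finrank_span_singleton (norm_ne_zero_iff.mp (hv ▸ one_ne_zero)), hd] at this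
      omega
    have hTK : ∀ x ∈ (ℂ ∙ v)ᗮ, T x ∈ (ℂ ∙ v)ᗮ := fun x => hT.apply_mem_orthogonal_singleton hTv
    obtain ⟨u, α, hu, hα, hTu⟩ := ih (hT.restrict hTK) hK
    exact ⟨Fin.cons v fun j => (u j : E), Fin.cons c α, hu.fin_cons_of_mem_orthogonal hv,
      Fin.cases hc hα, Fin.cases hTv fun j => congrArg Subtype.val (hTu j)⟩

theorem exists_orthonormalBasis_eigenvectors_nonneg [FiniteDimensional ℂ E] {ι : Type*}
    [Fintype ι] (hι : Fintype.card ι = finrank ℂ E) (hT : T.IsSymmetricAntilinear) :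
    ∃ (b : OrthonormalBasis ι ℂ E) (α : ι → ℝ),
      (∀ j, 0 ≤ α j) ∧ ∀ j, T (b j) = (α j : ℂ) • b j := by
  obtain ⟨u, α, hu, hα, hTu⟩ := hT.exists_orthonormal_eigenvectors_nonneg
  let e := Fintype.equivFinOfCardEq hι
  have hue : Orthonormal ℂ (u ∘ e) := hu.comp e e.injective
  refine ⟨.mk hue (hue.linearIndependent.span_eq_top_of_card_eq_finrank' hι).ge, α ∘ e,
    fun j => hα _, fun j => ?_⟩
  simpa using hTu (e j)

end IsSymmetricAntilinear

end LinearMap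

namespace Matrix

variable {m : Type*} [Fintype m]

def mulVecConjₗ (A : Matrix m m ℂ) : EuclideanSpace ℂ m →ₗ⋆[ℂ] EuclideanSpace ℂ m where
  toFun x := WithLp.toLp 2 (A *ᵥ star (WithLp.ofLp x))
  map_add' x y := by simp [mulVec_add]
  map_smul' c x := by simp [mulVec_smul]

theorem IsSymm.isSymmetricAntilinear_mulVecConjₗ {A : Matrix m m ℂ} (hA : A.IsSymm) :
    A.mulVecConjₗ.IsSymmetricAntilinear := by
  intro x y
  simp only [EuclideanSpace.inner_eq_star_dotProduct, mulVecConjₗ, LinearMap.coe_mk,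
    AddHom.coe_mk]
  rw [star_mulVec, star_star, star_mulVec, star_star, dotProduct_comm, ← dotProduct_mulVec,
    ← vecMul_transpose, hA.conjTranspose.eq]

theorem IsSymm.exists_takagi [DecidableEq m] {A : Matrix m m ℂ} (hA : A.IsSymm) :
    ∃ (u : m → m → ℂ) (α : m → ℝ), (∀ j, 0 ≤ α j) ∧
      (∀ i j, star (u i) ⬝ᵥ u j = if i = j then (1 : ℂ) else 0) ∧
      A = ∑ j, (α j : ℂ) • vecMulVec (u j) (u j) := by
  obtain ⟨b, α, hα, hb⟩ := hA.isSymmetricAntilinear_mulVecConjₗ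
    |>.exists_orthonormalBasis_eigenvectors_nonneg finrank_euclideanSpace.symm
  refine ⟨fun j => b j, α, hα, fun i j => ?_, ?_⟩
  · rw [dotProduct_comm, ← EuclideanSpace.inner_eq_star_dotProduct]
    exact orthonormal_iff_ite.mp b.orthonormal i j
  · ext i k
    have hcol : A i k = A.mulVecConjₗ (EuclideanSpace.single k 1) i := by
      simp [mulVecConjₗ]
    rw [hcol, ← b.sum_repr' (EuclideanSpace.single k 1)]
    simp only [map_sum, LinearMap.map_smulₛₗ, hb, EuclideanSpace.inner_single_right,
      WithLp.ofLp_sum, WithLp.ofLp_smul, Finset.sum_apply, sum_apply, Pi.smul_apply,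
      smul_apply, vecMulVec_apply, smul_eq_mul, RingHomCompTriple.comp_apply, RingHom.id_apply,
      one_mul]
    exact Finset.sum_congr rfl fun j _ => by ring

end Matrix

theorem flipOp_mulVec_apply {n : ℕ} (φ : Fin n × Fin n → ℂ) (p : Fin n × Fin n) :
    (flipOp n *ᵥ φ) p = φ p.swap := by
  simp only [mulVec, dotProduct, flipOp, eq_comm, ite_and, of_apply, ite_mul, one_mul, zero_mul,
    Fintype.sum_prod_type, Finset.sum_ite_eq', Finset.mem_univ, ↓reduceIte]
  rfl

theorem flipOp_mulVec_eq_self_iff {n : ℕ} (φ : Fin n × Fin n → ℂ) :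
    flipOp n *ᵥ φ = φ ↔ (of (Function.curry φ)).IsSymm := by
  rw [IsSymm.ext_iff, funext_iff, Prod.forall]
  simp [flipOp_mulVec_apply]

theorem stmt4 {n : ℕ} (φ : Fin n × Fin n → ℂ) :
    flipOp n *ᵥ φ = φ ↔
    ∃ (α : Fin n → ℝ) (u : Fin n → Fin n → ℂ),
      (∀ j, 0 ≤ α j) ∧
      (∀ i j, star (u i) ⬝ᵥ u j = if i = j then (1 : ℂ) else 0) ∧
      φ = ∑ j, (α j : ℂ) • kron (u j) (u j) := by
  rw [flipOp_mulVec_eq_self_iff]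
  constructor
  · intro hφ
    obtain ⟨u, α, hα, hu, hA⟩ := hφ.exists_takagi
    refine ⟨α, u, hα, hu, funext fun p => ?_⟩
    simpa [kron, Finset.sum_apply, Matrix.sum_apply, vecMulVec_apply] using congrFun₂ hA p.1 p.2
  · rintro ⟨α, u, -, -, rfl⟩
    exact IsSymm.ext fun i k => by simp [kron, Finset.sum_apply, mul_comm]
end
end

section
/- Let E: L(H_n) → L(H_n) be a quantum channel. Then the average gate fidelity satisfies F̄_E = (2/(n(n+1))) Tr(P_S (T ⊗ id_n)(C_E) P_S), where P_S is the projection onto the symmetric subspace of H_n ⊗ H_n. -/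
/-
Write `M` for the partial transpose of the Choi matrix. Since `P_S = (1 + F)/2` is a projection,
`Tr(P_S M P_S) = (Tr M + Tr(M F))/2`. The partial transpose fixes the diagonal, so
`Tr M = Tr C_E = Tr E(1) = Tr Σ Kᵢ†Kᵢ = n`, while composing with the flip turns the partial
transpose into `Σ_{j,k} C_E(jj, kk) = ⟨Ω|C_E|Ω⟩` for the unnormalised maximally entangled vector `Ω`.
As `C_E = Σᵢ |vec Kᵢ⟩⟨vec Kᵢ|` and `⟨Ω|vec Kᵢ⟩ = Tr Kᵢ`, this is `Σᵢ |Tr Kᵢ|²`.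
-/

open Matrix BigOperators
open scoped ComplexOrder

noncomputable section

lemma flipOp_mul_self (n : ℕ) : flipOp n * flipOp n = 1 := by
  ext p q
  simp only [flipOp, mul_apply, of_apply]
  rw [Finset.sum_eq_single p.swap]
  · simp [one_apply, Prod.ext_iff, and_comm]
  · rintro b - hb
    have : ¬(p.1 = b.2 ∧ p.2 = b.1) := fun h => hb (Prod.ext h.2.symm h.1.symm)
    simp [this]
  · simp

lemma Psym_mul_self (n : ℕ) : Psym n * Psym n = Psym n := by
  simp only [Psym, Matrix.smul_mul, Matrix.mul_smul, add_mul, mul_add, one_mul, mul_one,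
    flipOp_mul_self]
  module

lemma mul_flipOp_apply {n : ℕ} (M : Matrix (Fin n × Fin n) (Fin n × Fin n) ℂ)
    (p q : Fin n × Fin n) : (M * flipOp n) p q = M p q.swap := by
  simp only [mul_apply, flipOp, of_apply]
  rw [Finset.sum_eq_single q.swap]
  · simp
  · rintro b - hb
    have : ¬(b.1 = q.2 ∧ b.2 = q.1) := fun h => hb (Prod.ext h.1 h.2)
    simp [this]
  · simp

lemma trace_Psym_mul_mul_Psym {n : ℕ} (M : Matrix (Fin n × Fin n) (Fin n × Fin n) ℂ) :
    (Psym n * M * Psym n).trace = (M.trace + (M * flipOp n).trace) / 2 := by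
  rw [trace_mul_cycle, Psym_mul_self, trace_mul_comm, Psym, Matrix.mul_smul, trace_smul,
    mul_add, mul_one, trace_add, smul_eq_mul]
  ring

lemma trace_ptA {n : ℕ} (M : Matrix (Fin n × Fin n) (Fin n × Fin n) ℂ) :
    (ptA M).trace = M.trace := rfl

lemma trace_ptA_mul_flipOp {n : ℕ} (M : Matrix (Fin n × Fin n) (Fin n × Fin n) ℂ) :
    (ptA M * flipOp n).trace = ∑ j, ∑ k, M (j, j) (k, k) := by
  simp only [trace, diag, mul_flipOp_apply, ptA, of_apply, Fintype.sum_prod_type, Prod.swap]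
  exact Finset.sum_comm

lemma trace_choi {n : ℕ} (Λ : MatMap n) : (choi Λ).trace = (Λ 1).trace := by
  rw [← sum_single_one, map_sum, trace_sum]
  simp only [trace, diag, choi, of_apply, Fintype.sum_prod_type]

lemma choi_apply_of_kraus {n : ℕ} {ι : Type*} [Fintype ι] {E : MatMap n}
    {K : ι → Matrix (Fin n) (Fin n) ℂ} (hK : ∀ X, E X = ∑ i, K i * X * (K i)ᴴ)
    (p q : Fin n × Fin n) :
    choi E p q = ∑ i, K i p.2 p.1 * star (K i q.2 q.1) := by
  simp only [choi, of_apply, hK, Matrix.sum_apply, single_eq_single_vecMulVec_single,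
    mul_vecMulVec, vecMulVec_mul, vecMulVec_apply, mulVec_single_one, single_one_vecMul, col_apply, row_apply, conjTranspose_apply]

lemma trace_map_one_of_kraus {n : ℕ} {ι : Type*} [Fintype ι] {E : MatMap n}
    {K : ι → Matrix (Fin n) (Fin n) ℂ} (hK : ∀ X, E X = ∑ i, K i * X * (K i)ᴴ)
    (hsum : ∑ i, (K i)ᴴ * K i = 1) : (E 1).trace = n := by
  simp only [hK, mul_one, trace_sum, trace_mul_comm (K _)]
  rw [← trace_sum, hsum, trace_one, Fintype.card_fin]

lemma sum_choi_diag_of_kraus {n : ℕ} {ι : Type*} [Fintype ι] {E : MatMap n}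
    {K : ι → Matrix (Fin n) (Fin n) ℂ} (hK : ∀ X, E X = ∑ i, K i * X * (K i)ᴴ) :
    ∑ j, ∑ k, choi E (j, j) (k, k) = ∑ i, (Complex.normSq (K i).trace : ℂ) := by
  simp only [choi_apply_of_kraus hK, ← Complex.mul_conj, trace, diag, map_sum,
    Complex.star_def, Finset.sum_mul_sum]
  exact (Finset.sum_congr rfl fun _ _ => Finset.sum_comm).trans Finset.sum_comm

theorem stmt6 {n : ℕ} {ι : Type*} [Fintype ι]
    (E : MatMap n) (K : ι → Matrix (Fin n) (Fin n) ℂ)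
    (hK : ∀ X, E X = ∑ i, K i * X * (K i)ᴴ)
    (hsum : ∑ i, (K i)ᴴ * K i = 1) :
    ((n : ℂ) + ∑ i, (Complex.normSq ((K i).trace) : ℂ)) / ((n : ℂ) * ((n : ℂ) + 1)) =
      (2 / ((n : ℂ) * ((n : ℂ) + 1))) * (Psym n * ptA (choi E) * Psym n).trace := by
  rw [trace_Psym_mul_mul_Psym, trace_ptA, trace_choi, trace_map_one_of_kraus hK hsum,
    trace_ptA_mul_flipOp, sum_choi_diag_of_kraus hK]
  ring
end
end

section
/- Let D be a Hermitian operator on H_n ⊗ H_n such that ⟨φφ|D|φφ⟩ = 0 for all unit vectors |φ⟩ ∈ H_n. Then ⟨φφ|D|ψψ⟩ = 0 for all |φ⟩, |ψ⟩ ∈ H_n. -/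
/-!
Rescaling extends the hypothesis from unit vectors to all `φ`, so `⟨χχ|D|χχ⟩ = 0` for every `χ`.
Taking `χ = φ + tψ`, where `χ ⊗ χ = φφ + t (φψ + ψφ) + t² ψψ`, the form becomes a polynomial in
`t` and `t̄` that vanishes identically; its `t²` and `t̄²` coefficients are `⟨φφ|D|ψψ⟩` and
`⟨ψψ|D|φφ⟩`. Averaging against `t²` over the fourth roots of unity kills every other term, and
rescaling `ψ` by `1 + i` (so `ψψ` by `2i`) separates the two.
-/

open Matrix BigOperators
open scoped ComplexOrder

noncomputable section

lemma qf_smul {m : Type*} [Fintype m] (M : Matrix m m ℂ) (c : ℂ) (v : m → ℂ) :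
    qf M (c • v) = star c * c * qf M v := by
  simp only [qf, star_smul, smul_dotProduct, mulVec_smul, dotProduct_smul, smul_eq_mul]
  ring

lemma exists_unitv_smul {n : ℕ} {φ : Fin n → ℂ} (hφ : φ ≠ 0) :
    ∃ c : ℂ, c ≠ 0 ∧ unitv (c • φ) := by
  obtain ⟨r, hr, hrφ⟩ := RCLike.pos_iff_exists_ofReal.mp (dotProduct_star_self_pos_iff.mpr hφ)
  change (r : ℂ) = _ at hrφ
  refine ⟨((√r)⁻¹ : ℝ), by positivity, ?_⟩
  simp only [unitv, star_smul, smul_dotProduct, dotProduct_smul, smul_eq_mul, ← hrφ,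
    Complex.star_def, Complex.conj_ofReal]
  have hsqrt : (√r)⁻¹ * ((√r)⁻¹ * r) = 1 := by
    rw [← mul_assoc, ← mul_inv, Real.mul_self_sqrt hr.le, inv_mul_cancel₀ hr.ne']
  exact_mod_cast hsqrt

lemma qf_kron_self_eq_zero {n : ℕ} {D : Matrix (Fin n × Fin n) (Fin n × Fin n) ℂ}
    (h : ∀ φ : Fin n → ℂ, unitv φ → qf D (kron φ φ) = 0) (φ : Fin n → ℂ) :
    qf D (kron φ φ) = 0 := by
  rcases eq_or_ne φ 0 with rfl | hφ
  · simp [qf, kron, dotProduct]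
  obtain ⟨c, hc, hunit⟩ := exists_unitv_smul hφ
  have hcc : star (c * c) * (c * c) ≠ 0 := by simp [hc]
  have hkron : kron (c • φ) (c • φ) = (c * c) • kron φ φ := by
    funext p; simp only [kron, Pi.smul_apply, smul_eq_mul]; ring
  have hscaled := h _ hunit
  rw [hkron, qf_smul] at hscaled
  exact (mul_eq_zero.mp hscaled).resolve_left hcc

lemma kron_add_smul_self {n : ℕ} (φ ψ : Fin n → ℂ) (t : ℂ) :
    kron (φ + t • ψ) (φ + t • ψ) = kron φ φ + t • (kron φ ψ + kron ψ φ) + (t * t) • kron ψ ψ := by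
  funext p; simp only [kron, Pi.add_apply, Pi.smul_apply, smul_eq_mul]; ring

section Polarization

variable {m : Type*} [Fintype m] {D : Matrix m m ℂ} {a b c : m → ℂ}

lemma qf_add_smul_add_smul (s t : ℂ) :
    qf D (a + s • b + t • c) =
      qf D a + s * (star a ⬝ᵥ D *ᵥ b) + t * (star a ⬝ᵥ D *ᵥ c)
      + star s * (star b ⬝ᵥ D *ᵥ a) + star s * s * qf D b + star s * t * (star b ⬝ᵥ D *ᵥ c)
      + star t * (star c ⬝ᵥ D *ᵥ a) + star t * s * (star c ⬝ᵥ D *ᵥ b) + star t * t * qf D c := by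
  simp only [qf, star_add, star_smul, add_dotProduct, smul_dotProduct, mulVec_add, mulVec_smul,
    dotProduct_add, dotProduct_smul, smul_eq_mul]
  ring

lemma dotProduct_mulVec_add_eq_zero_of_forall_qf (h : ∀ t : ℂ, qf D (a + t • b + (t * t) • c) = 0) :
    star a ⬝ᵥ D *ᵥ c + star c ⬝ᵥ D *ᵥ a = 0 := by
  have h1 := h 1
  have h2 := h (-1)
  have h3 := h Complex.I
  have h4 := h (-Complex.I)
  simp only [qf_add_smul_add_smul, star_one, star_neg, star_mul', Complex.star_def,
    Complex.conj_I] at h1 h2 h3 h4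
  linear_combination (norm := ring_nf) (h1 + h2 - h3 - h4) / 4
  simp only [Complex.I_sq, Complex.I_pow_four]
  ring

lemma dotProduct_mulVec_eq_zero_of_forall_qf (h : ∀ t : ℂ, qf D (a + t • b + (t * t) • c) = 0) :
    star a ⬝ᵥ D *ᵥ c = 0 := by
  -- substituting `t ω` for `t` multiplies `c` by `ω² = 2i` and `star c` by `-2i`
  set ω : ℂ := 1 + Complex.I
  have hsum := dotProduct_mulVec_add_eq_zero_of_forall_qf h
  have hrot := dotProduct_mulVec_add_eq_zero_of_forall_qf (b := ω • b) (c := (ω * ω) • c)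
    fun t ↦ by
      rw [smul_smul, smul_smul]
      convert h (t * ω) using 4
      ring
  simp only [star_smul, smul_dotProduct, mulVec_smul, dotProduct_smul, smul_eq_mul, star_mul',
    ω, Complex.star_def, map_add, map_one, Complex.conj_I] at hrot
  linear_combination (norm := ring_nf) (hsum - Complex.I * hrot / 2) / 2
  simp only [Complex.I_sq, Complex.I_pow_three]
  ring

end Polarization

theorem stmt7_general {n : ℕ} (D : Matrix (Fin n × Fin n) (Fin n × Fin n) ℂ)
    (h : ∀ φ : Fin n → ℂ, unitv φ → qf D (kron φ φ) = 0) :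
    ∀ φ ψ : Fin n → ℂ, star (kron φ φ) ⬝ᵥ D *ᵥ kron ψ ψ = 0 := by
  intro φ ψ
  refine dotProduct_mulVec_eq_zero_of_forall_qf (b := kron φ ψ + kron ψ φ) fun t ↦ ?_
  rw [← kron_add_smul_self]
  exact qf_kron_self_eq_zero h _

theorem stmt7 {n : ℕ} (D : Matrix (Fin n × Fin n) (Fin n × Fin n) ℂ)
    (hD : D.IsHermitian)
    (h : ∀ φ : Fin n → ℂ, unitv φ → qf D (kron φ φ) = 0) :
    ∀ φ ψ : Fin n → ℂ, star (kron φ φ) ⬝ᵥ D *ᵥ kron ψ ψ = 0 :=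
  stmt7_general D h
end
end

section
/- Let Q, R: L(H_n) → L(H_n) be linear maps. Then F_Q = F_R (i.e., ⟨φ|Q(|φ⟩⟨φ|)|φ⟩ = ⟨φ|R(|φ⟩⟨φ|)|φ⟩ for all unit |φ⟩ ∈ H_n) if and only if P_S (T ⊗ id_n)(C_Q) P_S = P_S (T ⊗ id_n)(C_R) P_S. -/
open Matrix BigOperators
open scoped ComplexOrder

noncomputable section

/-!
Expanding `|φ⟩⟨φ|` in matrix units gives `F_Λ(φ) = ⟨φ⊗φ| (T ⊗ id)(C_Λ) |φ⊗φ⟩`. As `P_S` is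
self-adjoint and fixes `φ⊗φ`, the fidelity only sees `P_S (T ⊗ id)(C_Λ) P_S`, which is one
direction. Conversely, if the fidelities agree on unit vectors, then by homogeneity the sesquilinear
form of `D = (T ⊗ id)(C_Q) - (T ⊗ id)(C_R)` vanishes on every `φ⊗φ`. Polarizing along
`φ = a + s b` (a quadratic pencil in `s`) it vanishes on the symmetric tensors `a⊗b + b⊗a`, and
polarizing once more in each argument, between any two of them. The columns of `P_S` are such
symmetric tensors, so `P_S D P_S = 0`.
-/

namespace LinearMap

variable {M V : Type*} [AddCommGroup M] [Module ℂ M] [AddCommGroup V] [Module ℂ V]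
  (B : M →ₗ⋆[ℂ] M →ₗ[ℂ] ℂ)

theorem sesq_eq_zero_of_forall_add_smul {x y x' y' : M}
    (h : ∀ s : ℂ, B (x + s • y) (x' + s • y') = 0) : B x y' = 0 := by
  have E (s : ℂ) : B x x' + s * B x y' + starRingEnd ℂ s * B y x' +
      starRingEnd ℂ s * s * B y y' = 0 := by
    rw [← h s]
    simp only [map_add, map_smulₛₗ, add_apply, smul_apply, smul_eq_mul, RingHom.id_apply]
    ring
  have E1 := E 1; have Em1 := E (-1); have Ei := E Complex.I
  simp only [map_one, map_neg, Complex.conj_I] at E1 Em1 Ei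
  linear_combination (norm := (ring_nf; simp [Complex.I_sq]))
    (1 / 4 + Complex.I / 4) * E1 + (-1 / 4 + Complex.I / 4) * Em1 - Complex.I / 2 * Ei

theorem sesq_self_eq_zero_of_forall_quadratic {x₀ x₁ x₂ : M}
    (h : ∀ s : ℂ, B (x₀ + s • x₁ + (s * s) • x₂) (x₀ + s • x₁ + (s * s) • x₂) = 0) :
    B x₁ x₁ = 0 := by
  have E (s : ℂ) : B x₀ x₀ + s * B x₀ x₁ + s * s * B x₀ x₂ +
      starRingEnd ℂ s * B x₁ x₀ + starRingEnd ℂ s * s * B x₁ x₁ +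
      starRingEnd ℂ s * (s * s) * B x₁ x₂ +
      starRingEnd ℂ s * starRingEnd ℂ s * B x₂ x₀ +
      starRingEnd ℂ s * starRingEnd ℂ s * s * B x₂ x₁ +
      starRingEnd ℂ s * starRingEnd ℂ s * (s * s) * B x₂ x₂ = 0 := by
    rw [← h s]
    simp only [map_add, map_smulₛₗ, add_apply, smul_apply, smul_eq_mul, map_mul, RingHom.id_apply]
    ring
  have E0 := E 0; have E1 := E 1; have Em1 := E (-1); have E2 := E 2; have Em2 := E (-2)
  have Ei := E Complex.I; have Emi := E (-Complex.I)
  simp only [map_zero, map_one, map_neg, map_ofNat, Complex.conj_I] at E0 E1 Em1 E2 Em2 Ei Emi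
  -- the coefficient of |s|² is a combination of the values at s = 0, ±1, ±2, ±i
  linear_combination (norm := (ring_nf; simp [Complex.I_sq, Complex.I_pow_four]; ring))
    -5 / 4 * E0 + 5 / 12 * (E1 + Em1) - 1 / 24 * (E2 + Em2) + 1 / 4 * (Ei + Emi)

theorem sesq_symm_eq_zero_of_forall_self (κ : V →ₗ[ℂ] V →ₗ[ℂ] M)
    (h : ∀ ψ, B (κ ψ ψ) (κ ψ ψ) = 0) (a b c d : V) :
    B (κ a b + κ b a) (κ c d + κ d c) = 0 := by
  let σ := κ + κ.flip
  have hdiag (x y : V) : B (σ x y) (σ x y) = 0 :=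
    B.sesq_self_eq_zero_of_forall_quadratic (x₀ := κ x x) (x₂ := κ y y) fun s => by
      have hexpand : κ (x + s • y) (x + s • y) = κ x x + s • σ x y + (s * s) • κ y y := by
        simp only [σ, map_add, map_smul, add_apply, smul_apply, flip_apply, smul_add, smul_smul]
        abel
      rw [← hexpand, h]
  have hleft (x y z : V) : B (σ x y) (σ z y) = 0 :=
    B.sesq_eq_zero_of_forall_add_smul fun s => by
      simpa only [map_add, map_smul, add_apply, smul_apply] using hdiag (x + s • z) y
  show B (σ a b) (σ c d) = 0
  exact B.sesq_eq_zero_of_forall_add_smul (x' := σ c b) (y := σ a d) fun s => by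
    simpa only [map_add (σ _), map_smul (σ _)] using hleft a (b + s • d) c

end LinearMap

namespace Matrix

variable {m : Type*} [Fintype m]

def sesqForm (D : Matrix m m ℂ) : (m → ℂ) →ₗ⋆[ℂ] (m → ℂ) →ₗ[ℂ] ℂ :=
  LinearMap.mk₂'ₛₗ (starRingEnd ℂ) (RingHom.id ℂ) (fun u v => star u ⬝ᵥ D *ᵥ v)
    (fun _ _ _ => by simp only [star_add, add_dotProduct])
    (fun _ _ _ => by simp only [star_smul, smul_dotProduct]; rfl)
    (fun _ _ _ => by simp only [mulVec_add, dotProduct_add])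
    (fun _ _ _ => by simp only [mulVec_smul, dotProduct_smul]; rfl)

theorem sesqForm_apply (D : Matrix m m ℂ) (u v : m → ℂ) : D.sesqForm u v = star u ⬝ᵥ D *ᵥ v :=
  rfl

theorem sesqForm_sub (A D : Matrix m m ℂ) (u v : m → ℂ) :
    (A - D).sesqForm u v = A.sesqForm u v - D.sesqForm u v := by
  simp only [sesqForm_apply, sub_mulVec, dotProduct_sub]

theorem sesqForm_single [DecidableEq m] (D : Matrix m m ℂ) (p q : m) :
    D.sesqForm (Pi.single p 1) (Pi.single q 1) = D p q := by
  simp [sesqForm_apply]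

theorem sesqForm_conjTranspose_mul_mul (A D : Matrix m m ℂ) (u v : m → ℂ) :
    (Aᴴ * D * A).sesqForm u v = D.sesqForm (A *ᵥ u) (A *ᵥ v) := by
  simp only [sesqForm_apply, ← mulVec_mulVec, dotProduct_mulVec, star_mulVec]

end Matrix

section SymmetricSubspace

variable {n : ℕ}

def kronₗ (n : ℕ) : (Fin n → ℂ) →ₗ[ℂ] (Fin n → ℂ) →ₗ[ℂ] Fin n × Fin n → ℂ :=
  LinearMap.mk₂ ℂ kron
    (fun _ _ _ => funext fun _ => add_mul _ _ _)
    (fun _ _ _ => funext fun _ => mul_assoc _ _ _)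
    (fun _ _ _ => funext fun _ => mul_add _ _ _)
    (fun _ _ _ => funext fun _ => mul_left_comm _ _ _)

theorem kronₗ_apply (a b : Fin n → ℂ) : kronₗ n a b = kron a b := rfl

theorem kron_stdV (i j : Fin n) : kron (stdV n i) (stdV n j) = Pi.single (i, j) 1 := by
  ext ⟨k, l⟩
  by_cases hk : k = i <;> by_cases hl : l = j <;> simp [kron, stdV, hk, hl]

theorem flipOp_mulVec (v : Fin n × Fin n → ℂ) (p : Fin n × Fin n) :
    (flipOp n *ᵥ v) p = v (p.2, p.1) := by
  simp [flipOp, mulVec, dotProduct, Fintype.sum_prod_type, ite_and]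

theorem flipOp_conjTranspose (n : ℕ) : (flipOp n)ᴴ = flipOp n := by
  ext p q
  simp only [flipOp, conjTranspose_apply, of_apply]
  split_ifs <;> simp_all

theorem Psym_conjTranspose (n : ℕ) : (Psym n)ᴴ = Psym n := by
  simp [Psym, conjTranspose_smul, flipOp_conjTranspose]

theorem Psym_mulVec_apply (v : Fin n × Fin n → ℂ) (p : Fin n × Fin n) :
    (Psym n *ᵥ v) p = (v p + v (p.2, p.1)) / 2 := by
  simp only [Psym, smul_mulVec, add_mulVec, one_mulVec, Pi.smul_apply, Pi.add_apply, smul_eq_mul,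
    flipOp_mulVec]
  ring

theorem Psym_mulVec_kron_self (φ : Fin n → ℂ) : Psym n *ᵥ kron φ φ = kron φ φ := by
  ext p
  rw [Psym_mulVec_apply]
  simp only [kron]
  ring

theorem Psym_mulVec_single (p : Fin n × Fin n) :
    Psym n *ᵥ Pi.single p 1 =
      (1 / 2 : ℂ) • (kron (stdV n p.1) (stdV n p.2) + kron (stdV n p.2) (stdV n p.1)) := by
  ext q
  rw [Psym_mulVec_apply, kron_stdV, kron_stdV]
  obtain ⟨i, j⟩ := p
  obtain ⟨k, l⟩ := q
  simp only [Pi.smul_apply, Pi.add_apply, smul_eq_mul, Pi.single_apply, Prod.mk.injEq, and_comm]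
  ring

theorem Psym_mul_mul_Psym_apply (D : Matrix (Fin n × Fin n) (Fin n × Fin n) ℂ)
    (p q : Fin n × Fin n) :
    (Psym n * D * Psym n) p q = D.sesqForm (Psym n *ᵥ Pi.single p 1) (Psym n *ᵥ Pi.single q 1) := by
  rw [← (Psym n * D * Psym n).sesqForm_single p q]
  nth_rewrite 1 [← Psym_conjTranspose n]
  rw [sesqForm_conjTranspose_mul_mul]

theorem sesqForm_Psym_mul_mul_Psym_kron_self (D : Matrix (Fin n × Fin n) (Fin n × Fin n) ℂ)
    (φ : Fin n → ℂ) :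
    (Psym n * D * Psym n).sesqForm (kron φ φ) (kron φ φ) = D.sesqForm (kron φ φ) (kron φ φ) := by
  nth_rewrite 1 [← Psym_conjTranspose n]
  rw [sesqForm_conjTranspose_mul_mul, Psym_mulVec_kron_self]

end SymmetricSubspace

section Fidelity

variable {n : ℕ}

theorem ketbra_eq_sum (φ : Fin n → ℂ) :
    ketbra φ = ∑ i, ∑ j, (φ i * star (φ j)) • single i j 1 := by
  rw [ketbra, matrix_eq_sum_single (vecMulVec φ (star φ))]
  simp [smul_single, vecMulVec_apply]

theorem fid_eq_sesqForm (Λ : MatMap n) (φ : Fin n → ℂ) :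
    fid Λ φ = (ptA (choi Λ)).sesqForm (kron φ φ) (kron φ φ) := by
  rw [fid, ketbra_eq_sum]
  simp only [map_sum, map_smul, qf, sum_mulVec, smul_mulVec, dotProduct_sum, dotProduct_smul,
    sesqForm_apply]
  simp only [dotProduct, mulVec, smul_eq_mul, Fintype.sum_prod_type, Pi.star_apply, kron, ptA,
    choi, Matrix.of_apply, star_mul', Finset.mul_sum]
  rw [Finset.sum_comm]
  refine Finset.sum_congr rfl fun b _ => ?_
  rw [Finset.sum_comm]
  exact Finset.sum_congr rfl fun c _ => Finset.sum_congr rfl fun a _ =>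
    Finset.sum_congr rfl fun d _ => by ring

theorem exists_smul_unitv {ψ : Fin n → ℂ} (hψ : ψ ≠ 0) : ∃ c : ℂ, c ≠ 0 ∧ unitv (c • ψ) := by
  obtain ⟨r, hr, hrψ⟩ : ∃ r : ℝ, 0 < r ∧ (r : ℂ) = star ψ ⬝ᵥ ψ :=
    RCLike.pos_iff_exists_ofReal.mp (dotProduct_star_self_pos_iff.mpr hψ)
  refine ⟨((√r)⁻¹ : ℝ), by simpa using (Real.sqrt_pos.mpr hr).ne', ?_⟩
  rw [unitv, star_smul, smul_dotProduct, dotProduct_smul, ← hrψ]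
  simp only [smul_eq_mul, RCLike.star_def, Complex.conj_ofReal]
  have hsqrt : (√r)⁻¹ * ((√r)⁻¹ * r) = 1 := by
    rw [← mul_assoc, ← mul_inv, Real.mul_self_sqrt hr.le, inv_mul_cancel₀ hr.ne']
  exact_mod_cast hsqrt

theorem sesq_kron_self_eq_zero_of_forall_unitv
    (B : (Fin n × Fin n → ℂ) →ₗ⋆[ℂ] (Fin n × Fin n → ℂ) →ₗ[ℂ] ℂ)
    (h : ∀ φ, unitv φ → B (kron φ φ) (kron φ φ) = 0) (ψ : Fin n → ℂ) :
    B (kron ψ ψ) (kron ψ ψ) = 0 := by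
  rcases eq_or_ne ψ 0 with rfl | hψ
  · simp [← kronₗ_apply]
  obtain ⟨c, hc, hunit⟩ := exists_smul_unitv hψ
  have h' := h _ hunit
  simp only [← kronₗ_apply, map_smul, LinearMap.smul_apply, map_smulₛₗ, smul_eq_mul] at h'
  simpa [hc, kronₗ_apply] using h'

end Fidelity

theorem stmt9 {n : ℕ} (Q R : MatMap n) :
    (∀ φ : Fin n → ℂ, unitv φ → fid Q φ = fid R φ) ↔
      Psym n * ptA (choi Q) * Psym n = Psym n * ptA (choi R) * Psym n := by
  constructor
  · intro h
    rw [← sub_eq_zero, ← sub_mul, ← mul_sub]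
    set D := ptA (choi Q) - ptA (choi R)
    have hkron : ∀ ψ : Fin n → ℂ, D.sesqForm (kron ψ ψ) (kron ψ ψ) = 0 :=
      sesq_kron_self_eq_zero_of_forall_unitv _ fun φ hφ => by
        rw [sesqForm_sub, ← fid_eq_sesqForm, ← fid_eq_sesqForm, h φ hφ, sub_self]
    ext p q
    simp only [Psym_mul_mul_Psym_apply, Psym_mulVec_single, map_smulₛₗ, LinearMap.smul_apply,
      ← kronₗ_apply, D.sesqForm.sesq_symm_eq_zero_of_forall_self (kronₗ n) hkron,
      smul_zero, Matrix.zero_apply]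
  · intro hPsym φ _
    rw [fid_eq_sesqForm, fid_eq_sesqForm, ← sesqForm_Psym_mul_mul_Psym_kron_self,
      hPsym, sesqForm_Psym_mul_mul_Psym_kron_self]
end
end

section
/- Let Q, R: L(H_3) → L(H_3) be quantum channels with Q(I) = R(I) and equal gate fidelity. Then there exist r ≥ 0 and a unital quantum channel E: L(H_3) → L(H_3) such that R = Q + r(E − E†). -/
/-!
Put `Δ = R - Q`. Equal fidelities make the quartic form `φ ↦ ⟨φ|Δ(|φ⟩⟨φ|)|φ⟩` vanish, and
polarization shows that the Choi tensor `C` of `Δ` symmetrizes to zero under the swaps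
`a ↔ d`, `b ↔ c` of `C(a,b,c,d) = Δ(|a⟩⟨c|)_{bd}`. Hence `g(a,b,c,d) = C(a,b,c,d) + C(d,c,b,a)`
is antisymmetric in both pairs, while `Δ(I) = 0` and trace preservation kill its contraction
`∑ₘ g(m,p,m,q)`. In dimension 3, where `Λ²ℂ³ ≅ ℂ³`, this forces `g = 0`, i.e. `Δ† = -Δ`.
As `C` is Hermitian, `E = D + εΔ` with `D` the completely depolarizing channel is a unital
channel for small `ε > 0`, with `E† = D - εΔ`, so `Δ = (2ε)⁻¹ (E - E†)`.
-/

open Matrix BigOperators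
open scoped ComplexOrder

noncomputable section

lemma sesq_eq_zero_of_forall_self_eq_zero {E : Type*} [AddCommGroup E] [Module ℂ E]
    {B : E → E → ℂ} (hl : ∀ x x' y (k : ℂ), B (x + k • x') y = B x y + k * B x' y)
    (hr : ∀ x y y' (k : ℂ), B x (y + k • y') = B x y + starRingEnd ℂ k * B x y')
    (h : ∀ u, B u u = 0) (x y : E) : B x y = 0 := by
  have e₁ := h (y + (1 : ℂ) • x)
  have e₂ := h (y + Complex.I • x)
  simp only [hl, hr, map_one, Complex.conj_I] at e₁ e₂
  linear_combination (norm := ring_nf) (e₁ - Complex.I * e₂ - (1 - Complex.I) * (h x + h y)) / 2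
  simp only [Complex.I_sq, Complex.I_pow_three]
  ring

section Polarization

variable {ι : Type*} [Fintype ι]

def quadrilin (S : ι → ι → ι → ι → ℂ) (p q r s : ι → ℂ) : ℂ :=
  ∑ a, ∑ b, ∑ c, ∑ d, p a * q b * r c * s d * S a b c d

def quadrilinSymm (S : ι → ι → ι → ι → ℂ) (p q r s : ι → ℂ) : ℂ :=
  quadrilin S p q r s + quadrilin S p r q s + quadrilin S s q r p + quadrilin S s r q p

variable (S : ι → ι → ι → ι → ℂ) (p q r s x : ι → ℂ) (k : ℂ)

lemma quadrilin_add_smul₁ :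
    quadrilin S (p + k • x) q r s = quadrilin S p q r s + k * quadrilin S x q r s := by
  simp only [quadrilin, Finset.mul_sum, ← Finset.sum_add_distrib, Pi.add_apply, Pi.smul_apply,
    smul_eq_mul]
  exact Finset.sum_congr rfl fun _ _ => Finset.sum_congr rfl fun _ _ =>
    Finset.sum_congr rfl fun _ _ => Finset.sum_congr rfl fun _ _ => by ring

lemma quadrilin_add_smul₂ :
    quadrilin S p (q + k • x) r s = quadrilin S p q r s + k * quadrilin S p x r s := by
  simp only [quadrilin, Finset.mul_sum, ← Finset.sum_add_distrib, Pi.add_apply, Pi.smul_apply,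
    smul_eq_mul]
  exact Finset.sum_congr rfl fun _ _ => Finset.sum_congr rfl fun _ _ =>
    Finset.sum_congr rfl fun _ _ => Finset.sum_congr rfl fun _ _ => by ring

lemma quadrilin_add_smul₃ :
    quadrilin S p q (r + k • x) s = quadrilin S p q r s + k * quadrilin S p q x s := by
  simp only [quadrilin, Finset.mul_sum, ← Finset.sum_add_distrib, Pi.add_apply, Pi.smul_apply,
    smul_eq_mul]
  exact Finset.sum_congr rfl fun _ _ => Finset.sum_congr rfl fun _ _ =>
    Finset.sum_congr rfl fun _ _ => Finset.sum_congr rfl fun _ _ => by ring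

lemma quadrilin_add_smul₄ :
    quadrilin S p q r (s + k • x) = quadrilin S p q r s + k * quadrilin S p q r x := by
  simp only [quadrilin, Finset.mul_sum, ← Finset.sum_add_distrib, Pi.add_apply, Pi.smul_apply,
    smul_eq_mul]
  exact Finset.sum_congr rfl fun _ _ => Finset.sum_congr rfl fun _ _ =>
    Finset.sum_congr rfl fun _ _ => Finset.sum_congr rfl fun _ _ => by ring

lemma quadrilin_single [DecidableEq ι] (a b c d : ι) :
    quadrilin S (Pi.single a 1) (Pi.single b 1) (Pi.single c 1) (Pi.single d 1) = S a b c d := by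
  simp [quadrilin, Pi.single_apply]

variable {S p q r s}

/-- This is the coefficient of `|t|²` in `quadrilin S φ φ̄ φ̄ φ` at `φ = u + t v`, extracted by
averaging over `t ∈ {±1, ±i}`. -/
lemma quadrilinSymm_self_star_eq_zero (h : ∀ φ : ι → ℂ, quadrilin S φ (star φ) (star φ) φ = 0)
    (u v : ι → ℂ) : quadrilinSymm S v (star v) (star u) u = 0 := by
  have e : ∀ k : ℂ, quadrilin S (u + k • v) (star u + starRingEnd ℂ k • star v)
      (star u + starRingEnd ℂ k • star v) (u + k • v) = 0 := fun k => by
    simpa [star_smul] using h (u + k • v)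
  have e₁ := e 1
  have e₂ := e (-1)
  have e₃ := e Complex.I
  have e₄ := e (-Complex.I)
  simp only [quadrilin_add_smul₁, quadrilin_add_smul₂, quadrilin_add_smul₃, quadrilin_add_smul₄,
    map_one, map_neg, Complex.conj_I] at e₁ e₂ e₃ e₄
  unfold quadrilinSymm
  linear_combination (norm := ring_nf) (e₁ + e₂ + e₃ + e₄) / 4 - h u - h v
  simp only [Complex.I_sq, Complex.I_pow_four]
  ring

lemma quadrilinSymm_comm : quadrilinSymm S p q r s = quadrilinSymm S s r q p := by
  unfold quadrilinSymm
  ring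

lemma quadrilinSymm_eq_zero_of_self_star (h : ∀ u, quadrilinSymm S u (star u) r s = 0) :
    quadrilinSymm S p q r s = 0 := by
  rw [← star_star q]
  refine sesq_eq_zero_of_forall_self_eq_zero (B := fun x y => quadrilinSymm S x (star y) r s)
    (fun x x' y k => ?_) (fun x y y' k => ?_) h p (star q)
  · simp only [quadrilinSymm, quadrilin_add_smul₁, quadrilin_add_smul₄]
    ring
  · simp only [quadrilinSymm, star_add, star_smul, Complex.star_def, quadrilin_add_smul₂,
      quadrilin_add_smul₃]
    ring

lemma quadrilinSymm_eq_zero (h : ∀ φ : ι → ℂ, quadrilin S φ (star φ) (star φ) φ = 0) :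
    quadrilinSymm S p q r s = 0 := by
  refine quadrilinSymm_eq_zero_of_self_star fun u => ?_
  rw [quadrilinSymm_comm]
  exact quadrilinSymm_eq_zero_of_self_star (quadrilinSymm_self_star_eq_zero h u)

lemma symm_coeff_sum_eq_zero [DecidableEq ι]
    (h : ∀ φ : ι → ℂ, quadrilin S φ (star φ) (star φ) φ = 0) (a b c d : ι) :
    S a b c d + S a c b d + S d b c a + S d c b a = 0 := by
  simpa only [quadrilinSymm, quadrilin_single] using
    quadrilinSymm_eq_zero (p := Pi.single a 1) (q := Pi.single b 1) (r := Pi.single c 1)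
      (s := Pi.single d 1) h

end Polarization

lemma Fin.sum_univ_three_of_ne {M : Type*} [AddCommMonoid M] (f : Fin 3 → M) {i j k : Fin 3}
    (hij : i ≠ j) (hik : i ≠ k) (hjk : j ≠ k) : ∑ x, f x = f i + f j + f k := by
  fin_cases i <;> fin_cases j <;> fin_cases k <;> simp_all [Fin.sum_univ_three] <;> abel

lemma eq_zero_of_antisymm_of_sum_eq_zero {K : Type*} [Field K] [CharZero K]
    {g : Fin 3 → Fin 3 → Fin 3 → Fin 3 → K}
    (h₂₃ : ∀ a b c d, g a c b d = -g a b c d) (h₁₄ : ∀ a b c d, g d b c a = -g a b c d)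
    (htr : ∀ p q, ∑ m, g m p m q = 0) (a b c d : Fin 3) : g a b c d = 0 := by
  have hbb : ∀ a b d, g a b b d = 0 := fun a b d => self_eq_neg.1 (h₂₃ a b b d)
  have haa : ∀ a b c, g a b c a = 0 := fun a b c => self_eq_neg.1 (h₁₄ a b c a)
  have hsymm : ∀ m p, g m p m p = g p m p m := fun m p => by
    rw [h₂₃ m m p p, h₁₄ p m p m, neg_neg]
  have hmpmq : ∀ m p q, g m p m q = 0 := by
    intro m p q
    rcases eq_or_ne m p with rfl | hmp
    · exact hbb m m q
    rcases eq_or_ne m q with rfl | hmq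
    · exact haa m p m
    rcases eq_or_ne p q with rfl | hpq
    · obtain ⟨k, hkm, hkp⟩ : ∃ k : Fin 3, k ≠ m ∧ k ≠ p := by
        revert m p; decide
      have hp := htr p p
      have hm := htr m m
      have hk := htr k k
      rw [Fin.sum_univ_three_of_ne _ hmp hkm.symm hkp.symm, hbb] at hp hm hk
      linear_combination (hp + hm - hk + hsymm m p - hsymm k p - hsymm k m) / 2
    · have h := htr p q
      rwa [Fin.sum_univ_three_of_ne _ hmp hmq hpq, hbb p p q, haa q p q, add_zero, add_zero] at h
  have hcases : a = b ∨ a = c ∨ d = b ∨ d = c ∨ a = d ∨ b = c := by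
    revert a b c d; decide
  rcases hcases with rfl | rfl | rfl | rfl | rfl | rfl
  · rw [h₂₃ a c a d, hmpmq, neg_zero]
  · exact hmpmq a b d
  · rw [h₁₄ d d c a, h₂₃ d c d a, hmpmq, neg_zero, neg_zero]
  · rw [h₁₄ d b d a, hmpmq, neg_zero]
  · exact haa a b c
  · exact hbb a b d

section MatMap

variable {n : ℕ}

lemma map_single_apply (Λ : MatMap n) (a c : Fin n) (x : ℂ) (b d : Fin n) :
    Λ (single a c x) b d = x * choi Λ (a, b) (c, d) := by
  rw [show single a c x = x • single a c 1 by rw [smul_single, smul_eq_mul, mul_one], map_smul]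
  rfl

lemma map_apply_eq_sum_choi (Λ : MatMap n) (X : Matrix (Fin n) (Fin n) ℂ) (b d : Fin n) :
    Λ X b d = ∑ a, ∑ c, X a c * choi Λ (a, b) (c, d) := by
  conv_lhs => rw [matrix_eq_sum_single X]
  simp only [map_sum, Matrix.sum_apply, map_single_apply]

lemma choi_add (Λ Γ : MatMap n) : choi (Λ + Γ) = choi Λ + choi Γ := rfl

lemma choi_sub (Λ Γ : MatMap n) : choi (Λ - Γ) = choi Λ - choi Γ := rfl

lemma choi_smul (k : ℂ) (Λ : MatMap n) : choi (k • Λ) = k • choi Λ := rfl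

lemma fid_eq_quadrilin (Λ : MatMap n) (φ : Fin n → ℂ) :
    fid Λ φ = quadrilin (fun a b c d => choi Λ (a, b) (c, d)) φ (star φ) (star φ) φ := by
  simp only [fid, qf, quadrilin, dotProduct, mulVec, map_apply_eq_sum_choi Λ, ketbra,
    vecMulVec_apply, Pi.star_apply, Finset.mul_sum, Finset.sum_mul]
  refine ((Finset.sum_congr rfl fun _ _ => Finset.sum_comm).trans Finset.sum_comm).trans
    (Finset.sum_congr rfl fun _ _ => Finset.sum_congr rfl fun _ _ => Finset.sum_comm.trans
      (Finset.sum_congr rfl fun _ _ => Finset.sum_congr rfl fun _ _ => by ring))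

lemma fid_sub (Λ Γ : MatMap n) (φ : Fin n → ℂ) : fid (Λ - Γ) φ = fid Λ φ - fid Γ φ := by
  simp only [fid, qf, LinearMap.sub_apply, sub_mulVec, dotProduct_sub]

lemma fid_smul (Λ : MatMap n) (φ : Fin n → ℂ) (k : ℂ) :
    fid Λ (k • φ) = (starRingEnd ℂ k * k) ^ 2 * fid Λ φ := by
  simp only [fid, qf, ketbra, star_smul, vecMulVec_smul, smul_vecMulVec, map_smul, smul_mulVec,
    mulVec_smul, dotProduct_smul, smul_dotProduct, smul_eq_mul, Complex.star_def]
  ring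

lemma exists_smul_unitv_s15 {φ : Fin n → ℂ} (hφ : φ ≠ 0) : ∃ k : ℂ, k ≠ 0 ∧ unitv (k • φ) := by
  obtain ⟨s, hs, hsφ⟩ : ∃ s : ℝ, 0 < s ∧ (s : ℂ) = star φ ⬝ᵥ φ :=
    RCLike.pos_iff_exists_ofReal.1 (dotProduct_star_self_pos_iff.2 hφ)
  refine ⟨((√s)⁻¹ : ℝ), by simpa using (Real.sqrt_pos.2 hs).ne', ?_⟩
  rw [unitv, star_smul, smul_dotProduct, dotProduct_smul, ← hsφ]
  simp only [RCLike.star_def, Complex.conj_ofReal, smul_eq_mul]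
  have h : (√s)⁻¹ * (√s)⁻¹ * s = 1 := by
    rw [← mul_inv, Real.mul_self_sqrt hs.le, inv_mul_cancel₀ hs.ne']
  rw [← mul_assoc, ← Complex.ofReal_mul, ← Complex.ofReal_mul, h, Complex.ofReal_one]

lemma fid_eq_of_forall_unitv {Q R : MatMap n} (h : ∀ φ, unitv φ → fid Q φ = fid R φ)
    (φ : Fin n → ℂ) : fid Q φ = fid R φ := by
  rcases eq_or_ne φ 0 with rfl | hφ
  · simp [fid, qf]
  obtain ⟨k, hk, hunit⟩ := exists_smul_unitv_s15 hφ
  have hk' : (starRingEnd ℂ k * k) ^ 2 ≠ 0 := pow_ne_zero _ (mul_ne_zero (by simpa using hk) hk)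
  simpa only [fid_smul, mul_right_inj' hk'] using h _ hunit

lemma sum_choi_eq_zero_of_map_one_eq_zero {Δ : MatMap n} (h : Δ 1 = 0) (p q : Fin n) :
    ∑ m, choi Δ (m, p) (m, q) = 0 := by
  simpa [one_apply, h] using (map_apply_eq_sum_choi Δ 1 p q).symm

lemma sum_choi_eq_zero_of_trace_map_eq_zero {Δ : MatMap n} (h : ∀ X, (Δ X).trace = 0)
    (a c : Fin n) : ∑ m, choi Δ (a, m) (c, m) = 0 :=
  h (single a c 1)

lemma trace_map_mul_add_trace_mul_map_eq_zero {Δ : MatMap n}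
    (h : ∀ a b c d, choi Δ (a, b) (c, d) + choi Δ (d, c) (b, a) = 0)
    (X Y : Matrix (Fin n) (Fin n) ℂ) : (Δ X * Y).trace + (X * Δ Y).trace = 0 := by
  rw [matrix_eq_sum_single X, matrix_eq_sum_single Y]
  simp only [map_sum, Finset.sum_mul, Finset.mul_sum, trace_sum, ← Finset.sum_add_distrib]
  refine Finset.sum_eq_zero fun d _ => Finset.sum_eq_zero fun b _ =>
    Finset.sum_eq_zero fun a _ => Finset.sum_eq_zero fun c _ => ?_
  rw [trace_mul_single, trace_single_mul, map_single_apply, map_single_apply]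
  simp only [MulOpposite.smul_eq_mul_unop, MulOpposite.unop_op, smul_eq_mul]
  linear_combination X a c * Y d b * h a b c d

def depolarizing (n : ℕ) : MatMap n :=
  (n : ℂ)⁻¹ • (traceLinearMap (Fin n) ℂ ℂ).smulRight 1

lemma depolarizing_apply (X : Matrix (Fin n) (Fin n) ℂ) :
    depolarizing n X = ((n : ℂ)⁻¹ * X.trace) • 1 := by
  simp [depolarizing, smul_smul]

lemma choi_depolarizing : choi (depolarizing n) = (n : ℂ)⁻¹ • 1 := by
  ext ⟨a, b⟩ ⟨c, d⟩
  rcases eq_or_ne a c with rfl | hac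
  · simp [choi, depolarizing_apply, one_apply]
  · simp [choi, depolarizing_apply, one_apply, trace_single_eq_of_ne _ _ _ hac, hac]

lemma trace_depolarizing [NeZero n] (X : Matrix (Fin n) (Fin n) ℂ) :
    (depolarizing n X).trace = X.trace := by
  have hn : (n : ℂ) ≠ 0 := by exact_mod_cast NeZero.ne n
  simp only [depolarizing_apply, trace_smul, trace_one, Fintype.card_fin, smul_eq_mul]
  field_simp

lemma depolarizing_one [NeZero n] : depolarizing n 1 = 1 := by
  simp [depolarizing_apply, NeZero.ne]

lemma isDual_depolarizing : IsDual (depolarizing n) (depolarizing n) := by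
  intro X Y
  simp only [depolarizing_apply, smul_mul, Matrix.mul_smul, one_mul, mul_one, trace_smul,
    smul_eq_mul]
  ring

end MatMap

open scoped MatrixOrder Matrix.Norms.L2Operator in
lemma Matrix.IsHermitian.exists_posSemidef_smul_one_add_smul {m : Type*} [Fintype m]
    [DecidableEq m] {C : Matrix m m ℂ} (hC : C.IsHermitian) {c : ℝ} (hc : 0 < c) :
    ∃ ε : ℝ, 0 < ε ∧ ((c : ℂ) • 1 + (ε : ℂ) • C).PosSemidef := by
  have hnorm : (C + (‖C‖ : ℂ) • 1).PosSemidef := by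
    have := IsSelfAdjoint.neg_algebraMap_norm_le_self (A := Matrix m m ℂ) hC
    rw [le_iff, sub_neg_eq_add, Algebra.algebraMap_eq_smul_one] at this
    exact_mod_cast this
  refine ⟨c / (‖C‖ + 1), by positivity, ?_⟩
  have hsplit : (c : ℂ) • (1 : Matrix m m ℂ) + ((c / (‖C‖ + 1) : ℝ) : ℂ) • C
      = ((c / (‖C‖ + 1) : ℝ) : ℂ) • (C + (‖C‖ : ℂ) • 1) + ((c / (‖C‖ + 1) : ℝ) : ℂ) • 1 := by
    have hpos : (‖C‖ + 1 : ℂ) ≠ 0 := by exact_mod_cast (by positivity : (‖C‖ + 1 : ℝ) ≠ 0)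
    rw [smul_add, smul_smul, add_assoc, ← add_smul, add_comm]
    congr 1
    push_cast
    field_simp
  rw [hsplit]
  exact (hnorm.smul (by positivity)).add (PosSemidef.one.smul (by positivity))

theorem exists_unital_channel_smul_sub_dual {n : ℕ} [NeZero n] {Δ : MatMap n}
    (hherm : (choi Δ).IsHermitian) (htr : ∀ X, (Δ X).trace = 0) (h1 : Δ 1 = 0)
    (hanti : ∀ X Y, (Δ X * Y).trace + (X * Δ Y).trace = 0) :
    ∃ r : ℝ, 0 ≤ r ∧ ∃ E Ed : MatMap n, IsChannel E ∧ E 1 = 1 ∧ IsDual E Ed ∧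
      Δ = (r : ℂ) • (E - Ed) := by
  obtain ⟨ε, hε, hpsd⟩ := hherm.exists_posSemidef_smul_one_add_smul (c := (n : ℝ)⁻¹)
    (inv_pos.2 (Nat.cast_pos.2 (NeZero.pos n)))
  refine ⟨(2 * ε)⁻¹, by positivity, depolarizing n + (ε : ℂ) • Δ, depolarizing n - (ε : ℂ) • Δ,
    ⟨?_, fun X => ?_⟩, ?_, fun X Y => ?_, ?_⟩
  · rw [IsCP, choi_add, choi_smul, choi_depolarizing]
    rwa [Complex.ofReal_inv, Complex.ofReal_natCast] at hpsd
  · simp [trace_depolarizing, htr]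
  · simp [depolarizing_one, h1]
  · simp only [LinearMap.add_apply, LinearMap.sub_apply, LinearMap.smul_apply, add_mul, mul_sub,
      smul_mul, Matrix.mul_smul, trace_add, trace_sub, trace_smul, smul_eq_mul]
    linear_combination isDual_depolarizing X Y + (ε : ℂ) * hanti X Y
  · have hε' : (ε : ℂ) ≠ 0 := by exact_mod_cast hε.ne'
    rw [add_sub_sub_cancel, ← two_smul ℂ, smul_smul, smul_smul]
    push_cast
    rw [mul_assoc, inv_mul_cancel₀ (mul_ne_zero two_ne_zero hε'), one_smul]

lemma choi_add_choi_swap_eq_zero {Δ : MatMap 3} (h1 : Δ 1 = 0) (htr : ∀ X, (Δ X).trace = 0)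
    (hfid : ∀ φ, fid Δ φ = 0) (a b c d : Fin 3) :
    choi Δ (a, b) (c, d) + choi Δ (d, c) (b, a) = 0 := by
  have hsymm := symm_coeff_sum_eq_zero (S := fun a b c d => choi Δ (a, b) (c, d))
    fun φ => fid_eq_quadrilin Δ φ ▸ hfid φ
  refine eq_zero_of_antisymm_of_sum_eq_zero
    (g := fun a b c d => choi Δ (a, b) (c, d) + choi Δ (d, c) (b, a)) ?_ ?_ ?_ a b c d
  · intro a b c d
    linear_combination hsymm a b c d
  · intro a b c d
    linear_combination hsymm a b c d
  · intro p q
    rw [Finset.sum_add_distrib, sum_choi_eq_zero_of_map_one_eq_zero h1,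
      sum_choi_eq_zero_of_trace_map_eq_zero htr, add_zero]

theorem stmt15 (Q R : MatMap 3) (hQ : IsChannel Q) (hR : IsChannel R)
    (hI : Q 1 = R 1)
    (hfid : ∀ φ : Fin 3 → ℂ, unitv φ → fid Q φ = fid R φ) :
    ∃ r : ℝ, 0 ≤ r ∧ ∃ E Ed : MatMap 3, IsChannel E ∧ E 1 = 1 ∧ IsDual E Ed ∧
      R = Q + (r : ℂ) • (E - Ed) := by
  have h1 : (R - Q) 1 = 0 := by rw [LinearMap.sub_apply, hI, sub_self]
  have htr : ∀ X, ((R - Q) X).trace = 0 := fun X => by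
    rw [LinearMap.sub_apply, trace_sub, hR.2, hQ.2, sub_self]
  have hfid' : ∀ φ, fid (R - Q) φ = 0 := fun φ => by
    rw [fid_sub, fid_eq_of_forall_unitv hfid, sub_self]
  have hherm : (choi (R - Q)).IsHermitian := by
    rw [choi_sub]
    exact hR.1.1.sub hQ.1.1
  obtain ⟨r, hr, E, Ed, hE, hE1, hdual, hΔ⟩ := exists_unital_channel_smul_sub_dual hherm htr h1
    (trace_map_mul_add_trace_mul_map_eq_zero (choi_add_choi_swap_eq_zero h1 htr hfid'))
  exact ⟨r, hr, E, Ed, hE, hE1, hdual, by rw [← hΔ, add_sub_cancel]⟩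
end
end

section
/- Let X be a positive semidefinite operator on H_n ⊗ H_n whose range is contained in the symmetric subspace S (i.e., X = P_S X P_S). Then sup over product unit vectors ⟨ψχ|X|ψχ⟩ equals sup over symmetric product unit vectors ⟨φφ|X|φφ⟩; that is, ‖X‖_{S(1)} = max_{|φ⟩ ∈ H_n, ‖φ‖=1} ⟨φφ|X|φφ⟩. -/
open Matrix BigOperators
open scoped ComplexOrder

noncomputable section

/-!
Polarization: `P_S (ψ ⊗ χ) = ¼ (u ⊗ u - w ⊗ w)` with `u = ψ + χ`, `w = ψ - χ`. Writing `X = B* B`,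
the map `v ↦ ‖B v‖` is a seminorm with `⟨v|X|v⟩ = ‖B v‖²`, and `X = P_S X P_S` gives
`⟨ψχ|X|ψχ⟩ = ‖B P_S (ψ ⊗ χ)‖²`. If `‖B (φ ⊗ φ)‖ ≤ s` for unit `φ`, then by homogeneity
`‖B (u ⊗ u)‖ ≤ ‖u‖² s`, so the triangle inequality bounds `‖B P_S (ψ ⊗ χ)‖` by
`¼ (‖u‖² + ‖w‖²) s`, which is `s` by the parallelogram law.
-/

open WithLp
open scoped MatrixOrder

lemma star_dotProduct_self_eq_norm_sq {m : Type*} [Fintype m] (v : m → ℂ) :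
    star v ⬝ᵥ v = ((‖toLp 2 v‖ ^ 2 : ℝ) : ℂ) := by
  have h := inner_self_eq_norm_sq_to_K (𝕜 := ℂ) (toLp 2 v)
  rw [EuclideanSpace.inner_toLp_toLp, dotProduct_comm] at h
  exact_mod_cast h

lemma unitv_iff_norm_toLp_eq_one {n : ℕ} (φ : Fin n → ℂ) : unitv φ ↔ ‖toLp 2 φ‖ = 1 := by
  rw [unitv, star_dotProduct_self_eq_norm_sq, ← Complex.ofReal_one, Complex.ofReal_inj,
    pow_eq_one_iff_of_nonneg (norm_nonneg _) two_ne_zero]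

lemma qf_conjTranspose_mul_self {l m : Type*} [Fintype l] [Fintype m] (B : Matrix l m ℂ)
    (v : m → ℂ) : qf (Bᴴ * B) v = ((‖toLp 2 (B *ᵥ v)‖ ^ 2 : ℝ) : ℂ) := by
  rw [qf, ← mulVec_mulVec, dotProduct_mulVec, vecMul_conjTranspose, star_star,
    star_dotProduct_self_eq_norm_sq]

section Kron

variable {n : ℕ}

lemma kron_smul_smul (a b : ℂ) (ψ χ : Fin n → ℂ) :
    kron (a • ψ) (b • χ) = (a * b) • kron ψ χ := by
  funext p
  simp only [kron, Pi.smul_apply, smul_eq_mul]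
  ring

lemma flipOp_mulVec_kron (ψ χ : Fin n → ℂ) : flipOp n *ᵥ kron ψ χ = kron χ ψ := by
  funext p
  rw [mulVec, dotProduct, Finset.sum_eq_single (p.2, p.1)]
  · simp [flipOp, kron, mul_comm]
  · rintro q - hq
    simp only [flipOp, of_apply]
    rw [if_neg fun h => hq (Prod.ext h.2.symm h.1.symm), zero_mul]
  · simp

lemma Psym_mulVec_kron (ψ χ : Fin n → ℂ) :
    Psym n *ᵥ kron ψ χ = (1 / 4 : ℂ) • (kron (ψ + χ) (ψ + χ) - kron (ψ - χ) (ψ - χ)) := by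
  rw [Psym, smul_mulVec, add_mulVec, one_mulVec, flipOp_mulVec_kron]
  funext p
  simp only [kron, Pi.smul_apply, Pi.add_apply, Pi.sub_apply, smul_eq_mul]
  ring

lemma isHermitian_Psym (n : ℕ) : (Psym n).IsHermitian := by
  have hflip : (flipOp n).IsHermitian := by
    ext p q
    simp only [conjTranspose_apply, flipOp, of_apply]
    split_ifs <;> simp_all [and_comm, eq_comm]
  exact (isHermitian_one.add hflip).smul (by norm_num [IsSelfAdjoint, Complex.ext_iff])

lemma qf_eq_qf_Psym_mulVec {X : Matrix (Fin n × Fin n) (Fin n × Fin n) ℂ}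
    (hsupp : Psym n * X * Psym n = X) (w : Fin n × Fin n → ℂ) :
    qf X w = qf X (Psym n *ᵥ w) := by
  conv_lhs => rw [← hsupp]
  rw [qf, qf, ← mulVec_mulVec, ← mulVec_mulVec, dotProduct_mulVec, star_mulVec,
    (isHermitian_Psym n).eq]

end Kron

section Seminorm

variable {l : Type*} [Fintype l] {n : ℕ} {B : Matrix l (Fin n × Fin n) ℂ} {s : ℝ}

lemma norm_mulVec_kron_self_le
    (hs : ∀ φ : Fin n → ℂ, ‖toLp 2 φ‖ = 1 → ‖toLp 2 (B *ᵥ kron φ φ)‖ ≤ s) (u : Fin n → ℂ) :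
    ‖toLp 2 (B *ᵥ kron u u)‖ ≤ ‖toLp 2 u‖ ^ 2 * s := by
  rcases eq_or_ne u 0 with rfl | hu
  · simp [show kron (0 : Fin n → ℂ) 0 = 0 from funext fun _ => zero_mul _]
  have hnorm : ‖toLp 2 u‖ ≠ 0 := by simpa using hu
  set c : ℂ := (‖toLp 2 u‖ : ℂ)
  have hunit : ‖toLp 2 (c⁻¹ • u)‖ = 1 := by
    rw [toLp_smul, norm_smul, norm_inv, Complex.norm_real, Real.norm_of_nonneg (norm_nonneg _),
      inv_mul_cancel₀ hnorm]
  have hu_eq : kron u u = (c * c) • kron (c⁻¹ • u) (c⁻¹ • u) := by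
    rw [kron_smul_smul, smul_smul, mul_mul_mul_comm, mul_inv_cancel₀ (by simpa [c] using hnorm),
      one_mul, one_smul]
  calc ‖toLp 2 (B *ᵥ kron u u)‖ = ‖toLp 2 u‖ ^ 2 * ‖toLp 2 (B *ᵥ kron (c⁻¹ • u) (c⁻¹ • u))‖ := by
        rw [hu_eq, mulVec_smul, toLp_smul, norm_smul, norm_mul, Complex.norm_real,
          Real.norm_of_nonneg (norm_nonneg _), sq]
    _ ≤ ‖toLp 2 u‖ ^ 2 * s := by gcongr; exact hs _ hunit

lemma norm_mulVec_Psym_mulVec_kron_le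
    (hs : ∀ φ : Fin n → ℂ, ‖toLp 2 φ‖ = 1 → ‖toLp 2 (B *ᵥ kron φ φ)‖ ≤ s)
    {ψ χ : Fin n → ℂ} (hψ : ‖toLp 2 ψ‖ = 1) (hχ : ‖toLp 2 χ‖ = 1) :
    ‖toLp 2 (B *ᵥ (Psym n *ᵥ kron ψ χ))‖ ≤ s := by
  have hpar : ‖toLp 2 (ψ + χ)‖ ^ 2 + ‖toLp 2 (ψ - χ)‖ ^ 2 = 4 := by
    have := parallelogram_law_with_norm ℂ (toLp 2 ψ) (toLp 2 χ)
    rw [toLp_add, toLp_sub]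
    nlinarith [hψ, hχ]
  rw [Psym_mulVec_kron, mulVec_smul, mulVec_sub, toLp_smul, toLp_sub, norm_smul]
  calc ‖(1 / 4 : ℂ)‖ * ‖toLp 2 (B *ᵥ kron (ψ + χ) (ψ + χ)) - toLp 2 (B *ᵥ kron (ψ - χ) (ψ - χ))‖
      ≤ 1 / 4 * (‖toLp 2 (ψ + χ)‖ ^ 2 * s + ‖toLp 2 (ψ - χ)‖ ^ 2 * s) := by
        rw [show ‖(1 / 4 : ℂ)‖ = 1 / 4 by norm_num]
        gcongr
        exact (norm_sub_le _ _).trans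
          (add_le_add (norm_mulVec_kron_self_le hs _) (norm_mulVec_kron_self_le hs _))
    _ = s := by linear_combination s / 4 * hpar

end Seminorm

lemma exists_max_on_unit_vectors {n : ℕ} (hn : 0 < n) {f : (Fin n → ℂ) → ℝ} (hf : Continuous f) :
    ∃ φ₀, ‖toLp 2 φ₀‖ = 1 ∧ ∀ φ, ‖toLp 2 φ‖ = 1 → f φ ≤ f φ₀ := by
  have hne : (Metric.sphere (0 : EuclideanSpace ℂ (Fin n)) 1).Nonempty :=
    ⟨EuclideanSpace.single ⟨0, hn⟩ 1, by simp⟩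
  obtain ⟨φ₀, hφ₀, hmax⟩ := (isCompact_sphere _ _).exists_isMaxOn hne
    (hf.comp (PiLp.continuous_ofLp 2 _)).continuousOn
  exact ⟨φ₀.ofLp, by simpa using hφ₀, fun φ hφ => hmax (by simpa using hφ)⟩

theorem stmt17 {n : ℕ} (hn : 0 < n)
    (X : Matrix (Fin n × Fin n) (Fin n × Fin n) ℂ)
    (hX : X.PosSemidef) (hsupp : Psym n * X * Psym n = X) :
    IsGreatest {r : ℝ | ∃ φ : Fin n → ℂ, unitv φ ∧ r = (qf X (kron φ φ)).re}
      (sSup {r : ℝ | ∃ ψ χ : Fin n → ℂ, unitv ψ ∧ unitv χ ∧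
        r = (qf X (kron ψ χ)).re}) := by
  obtain ⟨B, rfl⟩ := CStarAlgebra.nonneg_iff_eq_star_mul_self.mp hX.nonneg
  have hqf (v : Fin n × Fin n → ℂ) : (qf (star B * B) v).re = ‖toLp 2 (B *ᵥ v)‖ ^ 2 := by
    rw [star_eq_conjTranspose, qf_conjTranspose_mul_self, Complex.ofReal_re]
  obtain ⟨φ₀, hφ₀, hmax⟩ := exists_max_on_unit_vectors hn
    (f := fun φ => ‖toLp 2 (B *ᵥ kron φ φ)‖) (by unfold kron; fun_prop)
  simp only [unitv_iff_norm_toLp_eq_one]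
  have hsup : IsGreatest {r : ℝ | ∃ ψ χ : Fin n → ℂ, ‖toLp 2 ψ‖ = 1 ∧ ‖toLp 2 χ‖ = 1 ∧
      r = (qf (star B * B) (kron ψ χ)).re} (qf (star B * B) (kron φ₀ φ₀)).re := by
    refine ⟨⟨φ₀, φ₀, hφ₀, hφ₀, rfl⟩, ?_⟩
    rintro _ ⟨ψ, χ, hψ, hχ, rfl⟩
    rw [qf_eq_qf_Psym_mulVec hsupp, hqf, hqf]
    gcongr
    exact norm_mulVec_Psym_mulVec_kron_le hmax hψ hχ
  rw [hsup.csSup_eq]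
  refine ⟨⟨φ₀, hφ₀, rfl⟩, ?_⟩
  rintro _ ⟨φ, hφ, rfl⟩
  rw [hqf, hqf]
  gcongr
  exact hmax φ hφ
end
end
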